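/- There exist absolute constants c₀, c₁, c₂, c₃ > 0 such that for every integer n ≥ c₁ the following holds with d = ⌈c₀·log n⌉. Let {ζ_{ij} : 1 ≤ i ≤ n, 1 ≤ j ≤ d} be independent random variables uniformly distributed in [−1,1] and let T_ζ : ℝᵈ → ℝⁿ be the random matrix with entries (ζ_{ij}). Then with probability at least 1 − 2·exp(−c₃·n·log n), both inf_{x ∈ S^{d−1}} ‖T_ζ x‖_∞ ≤ 1 and sup_{x ∈ S^{d−1}} ‖T_ζ x‖_∞ ≥ √(c₂·log n). -/

import Mathlib

open MeasureTheory ProbabilityTheory Real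
open scoped RealInnerProductSpace ENNReal

noncomputable section

/-- ℝⁿ with the Euclidean (ℓ₂) structure. -/
abbrev Euc (n : ℕ) := EuclideanSpace ℝ (Fin n)

/-- The standard gaussian measure on ℝⁿ (iid standard gaussian coordinates). -/
def stdGaussian (n : ℕ) : Measure (Euc n) :=
  (Measure.pi fun _ : Fin n => gaussianReal 0 1).map (MeasurableEquiv.toLp 2 (Fin n → ℝ))

/-- The dual (polar) body K° = {t : ⟨x,t⟩ ≤ 1 for all x ∈ K}. -/
def polarBody {n : ℕ} (K : Set (Euc n)) : Set (Euc n) := {t | ∀ x ∈ K, ⟪x, t⟫ ≤ 1}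

/-- A convex body: compact, convex, centrally symmetric, with nonempty interior. -/
def IsConvexBody {n : ℕ} (K : Set (Euc n)) : Prop :=
  IsCompact K ∧ Convex ℝ K ∧ K = -K ∧ (interior K).Nonempty

/-- ℓ(K) = E sup_{t ∈ K°} Σ gᵢ tᵢ for a standard gaussian vector g. -/
def ell {n : ℕ} (K : Set (Euc n)) : ℝ :=
  ∫ g, sSup ((fun t => ⟪g, t⟫) '' polarBody K) ∂ stdGaussian n

/-- The critical dimension d*(K) = (ℓ(K)/sup_{t∈K°}‖t‖₂)². -/
def dstar {n : ℕ} (K : Set (Euc n)) : ℝ :=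
  (ell K / sSup ((fun t => ‖t‖) '' polarBody K)) ^ 2

/-- ‖x‖_K = sup_{t ∈ K°} ⟨x,t⟩, the norm whose unit ball is K. -/
def normK {n : ℕ} (K : Set (Euc n)) (x : Euc n) : ℝ :=
  sSup ((fun t => ⟪x, t⟫) '' polarBody K)

variable {Ω : Type*} [MeasurableSpace Ω]

/-- The L_p norm (E|W|^p)^{1/p} of a real random variable. -/
def lpNorm (μ : Measure Ω) (p : ℝ) (W : Ω → ℝ) : ℝ := (∫ ω, |W ω| ^ p ∂μ) ^ (1 / p)

/-- A centred random vector with identity covariance. -/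
def IsIsotropic {l : ℕ} (μ : Measure Ω) (Y : Ω → Euc l) : Prop :=
  (∫ ω, Y ω ∂μ) = 0 ∧ ∀ t : Euc l, ∫ ω, ⟪Y ω, t⟫ ^ 2 ∂μ = ‖t‖ ^ 2

/-- L-subgaussian: ‖⟨Y,t⟩‖_{L_p} ≤ L √p ‖⟨Y,t⟩‖_{L₂} for all p ≥ 2. -/
def IsSubgaussian {l : ℕ} (μ : Measure Ω) (L : ℝ) (Y : Ω → Euc l) : Prop :=
  ∀ t : Euc l, ∀ p : ℝ, 2 ≤ p →
    lpNorm μ p (fun ω => ⟪Y ω, t⟫) ≤ L * Real.sqrt p * lpNorm μ 2 (fun ω => ⟪Y ω, t⟫)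

/-- L_q–L₂ norm equivalence with constant L. -/
def LqL2 {l : ℕ} (μ : Measure Ω) (q L : ℝ) (Y : Ω → Euc l) : Prop :=
  ∀ t : Euc l, lpNorm μ q (fun ω => ⟪Y ω, t⟫) ≤ L * lpNorm μ 2 (fun ω => ⟪Y ω, t⟫)

/-- Y symmetric: -Y has the same distribution as Y. -/
def IsSymmetricRV {l : ℕ} (μ : Measure Ω) (Y : Ω → Euc l) : Prop :=
  Measure.map (fun ω => -(Y ω)) μ = Measure.map Y μ

/-- Small-ball condition with constant κ₀. -/
def SmallBall {l : ℕ} (μ : Measure Ω) (κ₀ : ℝ) (Y : Ω → Euc l) : Prop :=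
  ∀ t : Euc l, μ {ω | |⟪Y ω, t⟫| ≤ κ₀ * ‖t‖} ≤ 1/1000

/-- (Ys i) are independent copies of Y: the joint law is the m-fold product of the law of Y. -/
def IIDCopies {l m : ℕ} (μ : Measure Ω) (Y : Ω → Euc l) (Ys : Fin m → Ω → Euc l) : Prop :=
  Measure.map (fun ω i => Ys i ω) μ = Measure.pi fun _ : Fin m => Measure.map Y μ

/-- (Xs i) and (Zs i) are independent copies of X and Z respectively, all mutually independent. -/
def JointIIDCopies {nd nn m : ℕ} (μ : Measure Ω) (X : Ω → Euc nd) (Z : Ω → Euc nn)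
    (Xs : Fin m → Ω → Euc nd) (Zs : Fin m → Ω → Euc nn) : Prop :=
  Measure.map (fun ω => ((fun i => Xs i ω), (fun i => Zs i ω))) μ =
    (Measure.pi fun _ : Fin m => Measure.map X μ).prod (Measure.pi fun _ : Fin m => Measure.map Z μ)

/-- The ensemble Γ = Γ₁*Γ₂* : ℝᵈ → ℝⁿ, Γx = m^{-1/2} Σᵢ ⟨Xᵢ,x⟩ Zᵢ. -/
def Gamma {nd nn m : ℕ} (Xs : Fin m → Ω → Euc nd) (Zs : Fin m → Ω → Euc nn) (ω : Ω)
    (x : Euc nd) : Euc nn :=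
  (Real.sqrt m)⁻¹ • ∑ i, ⟪Xs i ω, x⟫ • Zs i ω

/-- ‖a‖₀, the size of the support of a. -/
def suppCard {m : ℕ} (a : Fin m → ℝ) : ℕ := (Finset.univ.filter fun i => a i ≠ 0).card

/-- The event 𝒜 = 𝒜(κ₁,δ,θ). -/
def eventA {nd m : ℕ} (κ₁ δ θ : ℝ) (Xs : Fin m → Ω → Euc nd) : Set Ω :=
  {ω | (∀ v : Euc nd, ‖v‖ ≤ 1 → Real.sqrt (∑ i, ⟪Xs i ω, v⟫ ^ 2) ≤ κ₁ * Real.sqrt m) ∧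
       ∀ a : Fin m → ℝ, Real.sqrt (∑ i, (a i) ^ 2) ≤ 1 → (suppCard a : ℝ) ≤ θ * m →
         ‖∑ i, a i • Xs i ω‖ ≤ δ * Real.sqrt m}

/-- The law of a symmetric random sign. -/
def signMeasure : Measure ℝ := (2⁻¹ : ℝ≥0∞) • Measure.dirac 1 + (2⁻¹ : ℝ≥0∞) • Measure.dirac (-1)

/-- The law of m iid random signs. -/
def signPi (m : ℕ) : Measure (Fin m → ℝ) := Measure.pi fun _ => signMeasure

/-- The law of m iid standard gaussians. -/
def gaussPi (m : ℕ) : Measure (Fin m → ℝ) := Measure.pi fun _ => gaussianReal 0 1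

/-- The uniform probability measure on [-1,1]. -/
def uniformIcc : Measure ℝ := (2⁻¹ : ℝ≥0∞) • Measure.restrict volume (Set.Icc (-1) 1)

/-- The nonincreasing rearrangement of (|w i|): `decRe w i` is the (i+1)-st largest value. -/
def decRe {m : ℕ} (w : Fin m → ℝ) : Fin m → ℝ :=
  fun i => |w (Tuple.sort (fun j => |w j|) i.rev)|

/-!
Almost surely every entry of `T_ζ` lies in `[-1,1]`, so `‖T_ζ e₁‖_∞ ≤ 1`. For the supremum,
testing `x` against the normalised `i`-th row gives `sup ‖T_ζ x‖_∞ ≥ ‖ζ_i‖₂`, so it suffices that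
some row has `‖ζ_i‖₂² ≥ d/512`. A row with `‖ζ_i‖₂² < d/512` has at least `d/2` entries with
`|ζ_ij| < 1/16`, which by a union bound over the sets of such coordinates happens with probability
at most `2^d · 16^(-d/2) = 2^(-d)`. All `n` rows are short with probability at most
`2^(-dn) ≤ exp(-n log n / 2)` once `d ≥ log n`.
-/

open Finset in
theorem MeasureTheory.Measure.pi_exists_card_eq_forall_mem_le {ι α : Type*} [Fintype ι]
    [MeasurableSpace α] (μ : Measure α) [IsProbabilityMeasure μ] (s : Set α) (k : ℕ) :
    Measure.pi (fun _ : ι => μ) {x | ∃ S : Finset ι, #S = k ∧ ∀ i ∈ S, x i ∈ s} ≤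
      (Fintype.card ι).choose k * μ s ^ k := by
  classical
  have hcover : {x : ι → α | ∃ S : Finset ι, #S = k ∧ ∀ i ∈ S, x i ∈ s} ⊆
      ⋃ S ∈ powersetCard k univ, Set.univ.pi fun i => if i ∈ S then s else Set.univ := by
    rintro x ⟨S, hS, hx⟩
    refine Set.mem_biUnion (mem_powersetCard.mpr ⟨subset_univ S, hS⟩) ?_
    intro i _
    by_cases hi : i ∈ S <;> simp [hi, hx]
  calc _ ≤ _ := measure_mono hcover
    _ ≤ _ := measure_biUnion_finset_le _ _
    _ = ∑ _S ∈ powersetCard k (univ : Finset ι), μ s ^ k := by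
      refine Finset.sum_congr rfl fun S hS => ?_
      simp only [Measure.pi_pi, apply_ite μ, measure_univ, prod_ite_mem, univ_inter, prod_const,
        (mem_powersetCard.mp hS).2]
    _ = _ := by rw [sum_const, card_powersetCard, card_univ, nsmul_eq_mul]

open Finset in
theorem exists_card_eq_forall_abs_lt_of_sum_sq_lt {ι : Type*} [Fintype ι] (b : ι → ℝ) {ε : ℝ}
    (hε : 0 ≤ ε) (h : ∑ i, b i ^ 2 < Fintype.card ι * ε ^ 2 / 2) :
    ∃ S : Finset ι, #S = (Fintype.card ι + 1) / 2 ∧ ∀ i ∈ S, |b i| < ε := by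
  classical
  set L := univ.filter fun i => ε ≤ |b i|
  have hL : #L * ε ^ 2 ≤ ∑ i, b i ^ 2 :=
    calc #L * ε ^ 2 = ∑ _i ∈ L, ε ^ 2 := by rw [sum_const, nsmul_eq_mul]
      _ ≤ ∑ i ∈ L, b i ^ 2 := sum_le_sum fun i hi => by
          have := (mem_filter.mp hi).2
          nlinarith [sq_abs (b i)]
      _ ≤ ∑ i, b i ^ 2 := sum_le_sum_of_subset_of_nonneg (subset_univ L) fun i _ _ => sq_nonneg _
  have hcard : 2 * #L < Fintype.card ι := by
    by_contra! hge
    have : (Fintype.card ι : ℝ) ≤ 2 * #L := by exact_mod_cast hge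
    nlinarith [sq_nonneg ε]
  obtain ⟨S, hSL, hS⟩ := exists_subset_card_eq (s := Lᶜ) (n := (Fintype.card ι + 1) / 2)
    (by rw [card_compl]; omega)
  refine ⟨S, hS, fun i hi => ?_⟩
  simpa [L] using hSL hi

instance : IsProbabilityMeasure uniformIcc := by
  constructor
  simp [uniformIcc, Real.volume_Icc, one_add_one_eq_two, ENNReal.inv_mul_cancel]

theorem uniformIcc_abs_lt {r : ℝ} (hr : r ≤ 1) :
    uniformIcc {x | |x| < r} = ENNReal.ofReal r := by
  have hball : {x : ℝ | |x| < r} = Metric.ball 0 r := by ext; simp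
  have hsub : Metric.ball (0 : ℝ) r ⊆ Set.Icc (-1) 1 := fun x hx => by
    rw [Real.ball_eq_Ioo, zero_sub, zero_add] at hx
    exact ⟨by linarith [hx.1], by linarith [hx.2]⟩
  rw [hball, uniformIcc, Measure.smul_apply, Measure.restrict_eq_self _ hsub, Real.volume_ball,
    smul_eq_mul, ENNReal.ofReal_mul zero_le_two, ENNReal.ofReal_ofNat, ← mul_assoc,
    ENNReal.inv_mul_cancel two_ne_zero ENNReal.ofNat_ne_top, one_mul]

theorem ae_abs_le_one_uniformIcc : ∀ᵐ x ∂uniformIcc, |x| ≤ 1 :=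
  Measure.ae_smul_measure
    ((ae_restrict_mem measurableSet_Icc).mono fun _ hx => abs_le.mpr ⟨hx.1, hx.2⟩) _

theorem pi_uniformIcc_sum_sq_lt_le (ι : Type*) [Fintype ι] :
    Measure.pi (fun _ : ι => uniformIcc) {b | ∑ i, b i ^ 2 < Fintype.card ι / 512} ≤
      ENNReal.ofReal ((1 / 2) ^ Fintype.card ι) := by
  set d := Fintype.card ι
  set k := (d + 1) / 2
  calc _ ≤ Measure.pi (fun _ : ι => uniformIcc)
        {b | ∃ S : Finset ι, S.card = k ∧ ∀ i ∈ S, b i ∈ {x : ℝ | |x| < 1 / 16}} :=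
        measure_mono fun b hb =>
          exists_card_eq_forall_abs_lt_of_sum_sq_lt b (by norm_num) (by simp at hb ⊢; linarith)
    _ ≤ d.choose k * ENNReal.ofReal (1 / 16) ^ k := by
      rw [← uniformIcc_abs_lt (by norm_num : (1 / 16 : ℝ) ≤ 1)]
      exact Measure.pi_exists_card_eq_forall_mem_le uniformIcc _ k
    _ = ENNReal.ofReal (d.choose k * (1 / 16) ^ k) := by
      rw [ENNReal.ofReal_mul (by positivity), ENNReal.ofReal_natCast,
        ENNReal.ofReal_pow (by norm_num)]
    _ ≤ ENNReal.ofReal ((1 / 2) ^ d) := by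
      refine ENNReal.ofReal_le_ofReal ?_
      -- `2k ≥ d`, so `C(d,k) 16^(-k) ≤ 2^d 4^(-d)`
      calc (d.choose k : ℝ) * (1 / 16) ^ k ≤ 2 ^ d * (1 / 4) ^ d := by
            gcongr
            · exact_mod_cast Nat.choose_le_two_pow d k
            · calc ((1 : ℝ) / 16) ^ k = (1 / 4) ^ (2 * k) := by rw [pow_mul]; norm_num
                _ ≤ (1 / 4) ^ d := pow_le_pow_of_le_one (by norm_num) (by norm_num) (by omega)
        _ = (1 / 2) ^ d := by rw [← mul_pow]; norm_num

section SupNormMulVec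

variable {ι : Type*} {d : ℕ}

def supNormMulVec (a : ι → Fin d → ℝ) (x : Euc d) : ℝ := ⨆ i, |∑ j, a i j * x j|

theorem sum_mul_eq_inner (r : Fin d → ℝ) (x : Euc d) :
    ∑ j, r j * x j = ⟪WithLp.toLp 2 r, x⟫ := by
  simp [PiLp.inner_apply, mul_comm]

theorem supNormMulVec_nonneg (a : ι → Fin d → ℝ) (x : Euc d) : 0 ≤ supNormMulVec a x :=
  Real.iSup_nonneg fun _ => abs_nonneg _

theorem bddAbove_supNormMulVec_image_sphere [Fintype ι] (a : ι → Fin d → ℝ) :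
    BddAbove (supNormMulVec a '' Metric.sphere 0 1) := by
  refine ⟨∑ i, ‖WithLp.toLp 2 (a i)‖, ?_⟩
  rintro _ ⟨x, hx, rfl⟩
  refine Real.iSup_le (fun i => ?_) (by positivity)
  calc |∑ j, a i j * x j| ≤ ‖WithLp.toLp 2 (a i)‖ * ‖x‖ := by
        rw [sum_mul_eq_inner]; exact abs_real_inner_le_norm _ _
    _ = ‖WithLp.toLp 2 (a i)‖ := by rw [mem_sphere_zero_iff_norm.mp hx, mul_one]
    _ ≤ ∑ i, ‖WithLp.toLp 2 (a i)‖ :=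
        Finset.single_le_sum (fun i _ => norm_nonneg (WithLp.toLp 2 (a i))) (Finset.mem_univ i)

theorem sInf_supNormMulVec_image_sphere_le_one (a : ι → Fin d → ℝ) (j : Fin d)
    (h : ∀ i, |a i j| ≤ 1) : sInf (supNormMulVec a '' Metric.sphere 0 1) ≤ 1 := by
  have he : EuclideanSpace.single j (1 : ℝ) ∈ Metric.sphere (0 : Euc d) 1 := by simp
  have hbdd : BddBelow (supNormMulVec a '' Metric.sphere 0 1) := by
    refine ⟨0, ?_⟩
    rintro _ ⟨x, -, rfl⟩
    exact supNormMulVec_nonneg a x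
  refine (csInf_le hbdd ⟨_, he, rfl⟩).trans (Real.iSup_le (fun i => ?_) zero_le_one)
  simpa [PiLp.single_apply] using h i

theorem norm_row_le_sSup_supNormMulVec_image_sphere [Fintype ι] (a : ι → Fin d → ℝ) (i : ι) :
    ‖WithLp.toLp 2 (a i)‖ ≤ sSup (supNormMulVec a '' Metric.sphere 0 1) := by
  set r := WithLp.toLp 2 (a i)
  rcases eq_or_ne r 0 with hr | hr
  · rw [hr, norm_zero]
    refine Real.sSup_nonneg ?_
    rintro _ ⟨x, -, rfl⟩
    exact supNormMulVec_nonneg a x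
  have hx : ‖r‖⁻¹ • r ∈ Metric.sphere (0 : Euc d) 1 := by
    simp [norm_smul, norm_ne_zero_iff.mpr hr]
  refine le_trans ?_ (le_csSup (bddAbove_supNormMulVec_image_sphere a) ⟨_, hx, rfl⟩)
  calc ‖r‖ = |⟪r, ‖r‖⁻¹ • r⟫| := by
        rw [real_inner_smul_right, real_inner_self_eq_norm_sq, abs_of_nonneg (by positivity)]
        field_simp
    _ ≤ supNormMulVec a (‖r‖⁻¹ • r) := by
        rw [← sum_mul_eq_inner]
        exact le_ciSup (Finite.bddAbove_range fun i => |∑ j, a i j * (‖r‖⁻¹ • r) j|) i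

theorem sqrt_le_sSup_supNormMulVec_image_sphere [Fintype ι] (a : ι → Fin d → ℝ) (i : ι) {c : ℝ}
    (h : c ≤ ∑ j, a i j ^ 2) : √c ≤ sSup (supNormMulVec a '' Metric.sphere 0 1) := by
  refine (Real.sqrt_le_sqrt h).trans ?_
  simpa [EuclideanSpace.norm_eq] using norm_row_le_sSup_supNormMulVec_image_sphere a i

end SupNormMulVec

theorem half_pow_pow_le_exp {t : ℝ} {d : ℕ} (hd : t ≤ d) (n : ℕ) :
    ((1 / 2 : ℝ) ^ d) ^ n ≤ exp (-(1 / 2) * n * t) := by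
  have hrow : (1 / 2 : ℝ) ^ d ≤ exp (-(1 / 2) * t) := by
    rw [one_div, inv_pow, ← Real.exp_log (by positivity : (0 : ℝ) < 2 ^ d), ← Real.exp_neg,
      Real.log_pow, Real.exp_le_exp]
    nlinarith [Real.log_two_gt_d9]
  calc ((1 / 2 : ℝ) ^ d) ^ n ≤ exp (-(1 / 2) * t) ^ n := by gcongr
    _ = exp (-(1 / 2) * n * t) := by rw [← Real.exp_nat_mul]; ring_nf

theorem pi_pi_uniformIcc_forall_sum_sq_lt_le (ι κ : Type*) [Fintype ι] [Fintype κ] :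
    Measure.pi (fun _ : ι => Measure.pi fun _ : κ => uniformIcc)
        {a | ∀ i, ∑ j, a i j ^ 2 < (Fintype.card κ : ℝ) / 512} ≤
      ENNReal.ofReal ((1 / 2) ^ Fintype.card κ) ^ Fintype.card ι := by
  have hpi : {a : ι → κ → ℝ | ∀ i, ∑ j, a i j ^ 2 < (Fintype.card κ : ℝ) / 512} =
      Set.univ.pi fun _ => {b | ∑ j, b j ^ 2 < (Fintype.card κ : ℝ) / 512} := by
    ext; simp
  rw [hpi, Measure.pi_pi]
  calc _ ≤ ∏ _i : ι, ENNReal.ofReal ((1 / 2) ^ Fintype.card κ) :=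
        Finset.prod_le_prod' fun _ _ => pi_uniformIcc_sum_sq_lt_le κ
    _ = _ := by rw [Finset.prod_const, Finset.card_univ]

theorem ae_abs_le_one_pi_pi_uniformIcc (ι κ : Type*) [Fintype ι] [Fintype κ] :
    ∀ᵐ a ∂Measure.pi (fun _ : ι => Measure.pi fun _ : κ => uniformIcc), ∀ i j, |a i j| ≤ 1 := by
  have hrow : ∀ᵐ b ∂Measure.pi (fun _ : κ => uniformIcc), ∀ j, |b j| ≤ 1 :=
    ae_all_iff.2 fun j =>
      (Measure.tendsto_eval_ae_ae (μ := fun _ => uniformIcc) (i := j)).eventually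
        ae_abs_le_one_uniformIcc
  exact ae_all_iff.2 fun i =>
    (Measure.tendsto_eval_ae_ae (μ := fun _ => Measure.pi fun _ : κ => uniformIcc)
      (i := i)).eventually hrow

theorem one_sub_exp_le_pi_pi_uniformIcc_exists_sum_sq_ge {n d : ℕ} {t : ℝ} (ht : t ≤ d) :
    ENNReal.ofReal (1 - exp (-(1 / 2) * n * t)) ≤
      Measure.pi (fun _ : Fin n => Measure.pi fun _ : Fin d => uniformIcc)
        {a | ∃ i, t / 512 ≤ ∑ j, a i j ^ 2} := by
  set H := {a : Fin n → Fin d → ℝ | ∃ i, t / 512 ≤ ∑ j, a i j ^ 2}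
  have hHm : MeasurableSet H := by measurability
  have hHc : Hᶜ ⊆ {a | ∀ i, ∑ j, a i j ^ 2 < (Fintype.card (Fin d) : ℝ) / 512} := fun a ha i => by
    simp only [H, Set.mem_compl_iff, Set.mem_ofPred_eq, not_exists, not_le] at ha
    simp only [Fintype.card_fin]
    linarith [ha i]
  rw [← ENNReal.sub_sub_cancel ENNReal.one_ne_top prob_le_one, ← prob_compl_eq_one_sub hHm,
    ENNReal.ofReal_sub _ (exp_pos _).le, ENNReal.ofReal_one]
  refine tsub_le_tsub_left ((measure_mono hHc).trans
    ((pi_pi_uniformIcc_forall_sum_sq_lt_le (Fin n) (Fin d)).trans ?_)) 1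
  simp only [Fintype.card_fin]
  rw [← ENNReal.ofReal_pow (by norm_num)]
  exact ENNReal.ofReal_le_ofReal (half_pow_pow_le_exp ht n)

/-- Example: a single uniform-entry matrix is not a Dvoretzky–Milman ensemble for the cube. -/
theorem uniform_matrix_bad_for_cube :
    ∃ c₀ c₁ c₂ c₃ : ℝ, 0 < c₀ ∧ 0 < c₁ ∧ 0 < c₂ ∧ 0 < c₃ ∧
      ∀ n : ℕ, c₁ ≤ (n : ℝ) →
      ∀ d : ℕ, d = ⌈c₀ * Real.log n⌉₊ →
      ∀ (Ω : Type) [MeasurableSpace Ω] (μ : Measure Ω), IsProbabilityMeasure μ →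
      ∀ A : Ω → (Fin n → Fin d → ℝ),
        Measure.map A μ = (Measure.pi fun _ : Fin n => Measure.pi fun _ : Fin d => uniformIcc) →
        μ {ω | sInf ((fun x : Euc d => ⨆ i : Fin n, |∑ j : Fin d, A ω i j * x j|) ''
                  Metric.sphere 0 1) ≤ 1 ∧
               Real.sqrt (c₂ * Real.log n) ≤
                 sSup ((fun x : Euc d => ⨆ i : Fin n, |∑ j : Fin d, A ω i j * x j|) ''
                  Metric.sphere 0 1)}
          ≥ ENNReal.ofReal (1 - 2 * Real.exp (-c₃ * n * Real.log n)) := by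
  refine ⟨1, 2, 1 / 512, 1 / 2, by norm_num, by norm_num, by norm_num, by norm_num, ?_⟩
  intro n hn d hd Ω _ μ _ A hA
  have hlog : 0 < log n := Real.log_pos (by linarith)
  have hdlog : log n ≤ d := by rw [hd, one_mul]; exact Nat.le_ceil _
  have hd0 : 0 < d := by exact_mod_cast hlog.trans_le hdlog
  have hAm : AEMeasurable A μ := .of_map_ne_zero (hA ▸ IsProbabilityMeasure.ne_zero _)
  set H := {a : Fin n → Fin d → ℝ | ∃ i, log n / 512 ≤ ∑ j, a i j ^ 2}
  have hHm : MeasurableSet H := by measurability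
  have hbdd : ∀ᵐ a ∂μ.map A, ∀ i j, |a i j| ≤ 1 := by
    rw [hA]; exact ae_abs_le_one_pi_pi_uniformIcc (Fin n) (Fin d)
  calc _ ≤ ENNReal.ofReal (1 - exp (-(1 / 2) * n * log n)) :=
        ENNReal.ofReal_le_ofReal (by linarith [exp_pos (-(1 / 2) * n * log n)])
    _ ≤ μ.map A H := hA ▸ one_sub_exp_le_pi_pi_uniformIcc_exists_sum_sq_ge hdlog
    _ = μ (A ⁻¹' H) := Measure.map_apply_of_aemeasurable hAm hHm
    _ ≤ _ := measure_mono_ae <| (ae_of_ae_map hAm hbdd).mono fun ω hω ⟨i, hi⟩ =>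
      ⟨sInf_supNormMulVec_image_sphere_le_one (A ω) ⟨0, hd0⟩ fun i => hω i _,
        sqrt_le_sSup_supNormMulVec_image_sphere (A ω) i (by linarith)⟩

end
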